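/- If 0 < x_1 < ... < x_{n+1} < 1, the inverse of the Bernstein–Vandermonde matrix A admits a factorization A^{-1} = G_1 G_2 ··· G_n D^{-1} F_n F_{n-1} ··· F_1, where each F_i is a lower bidiagonal matrix with unit diagonal whose only nonzero subdiagonal entries are -m_{k,i} in rows k = i+1,...,n+1, each G_i is the transpose of such a lower bidiagonal matrix with subdiagonal entries -m̃_{k,i}, and D = diag(p_{1,1},...,p_{n+1,n+1}). -/

import Mathlib

/-!
With `u_i = x_{i+1} / (1 - x_{i+1})`, the matrix `A = (C(n, j) (1 - x_{i+1})^n u_i^j)` is a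
Vandermonde matrix in `u` with row weights `w_i = (1 - x_{i+1})^n` and column weights
`c_j = C(n, j)`. Neville elimination of its rows by `F_1, …, F_n` turns row `i` into
`c_j w_i ∏_{k<i} (u_i - u_k) h_{j-i}(u_0, …, u_i)`, where `h` is the complete homogeneous
symmetric polynomial; the closed forms `m_{i,j}` are the ratios of the prefactors of consecutive
rows. The column operations `G_1, …, G_n` then clear this
upper triangular matrix down to `D`, since `h_m(u_t, …, u_i) - u_t h_{m-1}(u_t, …, u_i) =
h_m(u_{t+1}, …, u_i)` and `c_j / c_{j-1}` is the factor in `m̃`. So `F A G = D` with `F`, `G`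
unipotent, and `A⁻¹ = G D⁻¹ F`.
-/

/-- Closed form of the Neville multipliers m_{i,j} of the Bernstein–Vandermonde matrix
(1-based paper indexing). -/
noncomputable def mBV (n : ℕ) (x : ℕ → ℝ) (i j : ℕ) : ℝ :=
  (1 - x i) ^ (n + 1 - j) * (1 - x (i - j)) *
      (∏ k ∈ Finset.Icc 1 (j - 1), (x i - x (i - k))) /
    ((1 - x (i - 1)) ^ (n + 2 - j) * ∏ k ∈ Finset.Icc 2 j, (x (i - 1) - x (i - k)))

/-- Closed form of the Neville multipliers m̃_{i,j} of the transpose. -/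
noncomputable def mtBV (n : ℕ) (x : ℕ → ℝ) (i j : ℕ) : ℝ :=
  ((n : ℝ) - i + 2) * x j / (((i : ℝ) - 1) * (1 - x j))

/-- Closed form of the diagonal pivots p_{i,i}. -/
noncomputable def pBV (n : ℕ) (x : ℕ → ℝ) (i : ℕ) : ℝ :=
  (n.choose (i - 1) : ℝ) * (1 - x i) ^ (n + 1 - i) *
      (∏ k ∈ Finset.Ico 1 i, (x i - x k)) / ∏ k ∈ Finset.Icc 1 (i - 1), (1 - x k)

/-- F_i: lower bidiagonal, unit diagonal, subdiagonal entries -m_{k,i} in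
(paper) rows k = i+1,...,n+1. Matrix indices are 0-based: row k ↔ paper row k+1. -/
noncomputable def FBV (n : ℕ) (x : ℕ → ℝ) (i : ℕ) : Matrix (Fin (n + 1)) (Fin (n + 1)) ℝ :=
  Matrix.of fun k l =>
    if k = l then 1
    else if (k : ℕ) = (l : ℕ) + 1 ∧ i ≤ (k : ℕ) then -(mBV n x ((k : ℕ) + 1) i) else 0

/-- G_i: transpose of a lower bidiagonal matrix with subdiagonal entries -m̃_{k,i}. -/
noncomputable def GBV (n : ℕ) (x : ℕ → ℝ) (i : ℕ) : Matrix (Fin (n + 1)) (Fin (n + 1)) ℝ :=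
  Matrix.of fun k l =>
    if k = l then 1
    else if (l : ℕ) = (k : ℕ) + 1 ∧ i ≤ (l : ℕ) then -(mtBV n x ((l : ℕ) + 1) i) else 0

/-- D = diag(p_{1,1},...,p_{n+1,n+1}). -/
noncomputable def DBV (n : ℕ) (x : ℕ → ℝ) : Matrix (Fin (n + 1)) (Fin (n + 1)) ℝ :=
  Matrix.diagonal fun k => pBV n x ((k : ℕ) + 1)


open scoped Matrix

theorem prod_range_sub_eq_prod_Icc {M : Type*} [CommMonoid M] (f : ℕ → M) (n : ℕ) :
    ∏ k ∈ Finset.range n, f (n - k) = ∏ k ∈ Finset.Icc 1 n, f k := by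
  rw [← Finset.Ico_add_one_right_eq_Icc, Finset.prod_Ico_eq_prod_range, Nat.add_sub_cancel,
    ← Finset.prod_range_reflect]
  exact Finset.prod_congr rfl fun k hk => by rw [Finset.mem_range] at hk; congr 1; omega

theorem mul_prod_range_sub {M : Type*} [CommMonoid M] (f : ℕ → M) (a s : ℕ) :
    f (a - s) * ∏ k ∈ Finset.range s, f (a - k) =
      f a * ∏ k ∈ Finset.range s, f (a - 1 - k) := by
  rw [mul_comm, ← Finset.prod_range_succ, Finset.prod_range_succ', mul_comm]
  simp only [Nat.sub_zero, Nat.sub_sub, add_comm 1]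

theorem odds_sub_odds {K : Type*} [Field K] {a b : K} (ha : a ≠ 1) (hb : b ≠ 1) :
    a / (1 - a) - b / (1 - b) = (a - b) / ((1 - a) * (1 - b)) := by
  have ha' : 1 - a ≠ 0 := sub_ne_zero.2 ha.symm
  have hb' : 1 - b ≠ 0 := sub_ne_zero.2 hb.symm
  field_simp
  ring

theorem one_sub_pow_sub_mul_pow {K : Type*} [Field K] {y : K} (hy : y ≠ 1) {n j : ℕ}
    (hj : j ≤ n) : (1 - y) ^ (n - j) * y ^ j = (1 - y) ^ n * (y / (1 - y)) ^ j := by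
  have hy' : 1 - y ≠ 0 := sub_ne_zero.2 hy.symm
  rw [div_pow, ← pow_sub_mul_pow (1 - y) hj]
  field_simp

variable {R : Type*} [CommRing R]

theorem Matrix.inv_eq_of_mul_mul_eq {ι : Type*} [Fintype ι] [DecidableEq ι]
    {F A G D : Matrix ι ι R} (hF : IsUnit F) (hD : IsUnit D.det) (h : F * A * G = D) :
    A⁻¹ = G * D⁻¹ * F := by
  refine Matrix.inv_eq_right_inv (hF.mul_left_cancel ?_)
  rw [mul_one, ← mul_assoc, ← mul_assoc, ← mul_assoc, h, Matrix.mul_nonsing_inv _ hD, one_mul]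

/-- `completeHom u m a b` is the complete homogeneous symmetric polynomial `h_m(u_a, …, u_b)`;
for `m > 0` it vanishes when `b < a`. -/
def completeHom (u : ℕ → R) : ℕ → ℕ → ℕ → R
  | 0, _, _ => 1
  | m + 1, a, b =>
    if b < a then 0 else completeHom u (m + 1) (a + 1) b + u a * completeHom u m a b
termination_by m a b => (m, b + 1 - a)

section CompleteHom

variable (u : ℕ → R)

@[simp] theorem completeHom_zero (a b : ℕ) : completeHom u 0 a b = 1 := by
  rw [completeHom]

theorem completeHom_succ_of_le (m : ℕ) {a b : ℕ} (h : a ≤ b) :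
    completeHom u (m + 1) a b = completeHom u (m + 1) (a + 1) b + u a * completeHom u m a b := by
  rw [completeHom, if_neg (not_lt.2 h)]

theorem completeHom_succ_of_lt (m : ℕ) {a b : ℕ} (h : b < a) :
    completeHom u (m + 1) a b = 0 := by
  rw [completeHom, if_pos h]

theorem completeHom_self (m a : ℕ) : completeHom u m a a = u a ^ m := by
  induction m with
  | zero => simp
  | succ m ih =>
    rw [completeHom_succ_of_le u m le_rfl, completeHom_succ_of_lt u m (Nat.lt_succ_self a), ih]
    ring

theorem completeHom_succ_right (m : ℕ) {a b : ℕ} (h : a ≤ b + 1) :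
    completeHom u (m + 1) a (b + 1) =
      completeHom u (m + 1) a b + u (b + 1) * completeHom u m a (b + 1) := by
  obtain rfl | h := h.eq_or_lt
  · rw [completeHom_self, completeHom_succ_of_lt u m (Nat.lt_succ_self b), completeHom_self]
    ring
  rw [completeHom_succ_of_le u m h.le, completeHom_succ_of_le u m (Nat.lt_succ_iff.1 h),
    completeHom_succ_right m (a := a + 1) (b := b) h]
  cases m with
  | zero => simp only [completeHom_zero]; ring
  | succ m =>
    linear_combination u a * completeHom_succ_right m (a := a) (b := b) h.le -
      u (b + 1) * completeHom_succ_of_le u m (a := a) (b := b + 1) h.le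
termination_by (m, b + 1 - a)

/-- The recurrence of divided differences: `h_m(u_a, …, u_b)` is the divided difference of
`t ↦ t ^ (m + b - a)` at `u_a, …, u_b`. -/
theorem completeHom_succ_sub (m : ℕ) {a b : ℕ} (h : a ≤ b + 1) :
    completeHom u (m + 1) (a + 1) (b + 1) - completeHom u (m + 1) a b =
      (u (b + 1) - u a) * completeHom u m a (b + 1) := by
  linear_combination completeHom_succ_right u m h - completeHom_succ_of_le u m h

end CompleteHom

section Bidiagonal

variable {N : ℕ}

def lowerBidiag (s : ℕ) (m : ℕ → R) : Matrix (Fin N) (Fin N) R :=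
  Matrix.of fun k l => if k = l then 1 else if (k : ℕ) = l + 1 ∧ s ≤ k then -m k else 0

theorem lowerBidiag_mul_of_apply {s : ℕ} (hs : 0 < s) (m : ℕ → R) (f : ℕ → ℕ → R)
    (i j : Fin N) :
    (lowerBidiag s m * Matrix.of (fun k l : Fin N => f k l) : Matrix (Fin N) (Fin N) R) i j =
      f i j - if s ≤ i then m i * f (i - 1) j else 0 := by
  rw [Matrix.mul_apply]
  split_ifs with hi
  · let i' : Fin N := ⟨i - 1, by omega⟩
    have hi' : (i' : ℕ) = i - 1 := rfl
    rw [Fintype.sum_eq_add i i' (Fin.ne_of_val_ne (by omega))]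
    · simp only [lowerBidiag, Matrix.of_apply, if_true, hi']
      rw [if_neg (Fin.ne_of_val_ne (by omega)), if_pos ⟨by omega, hi⟩]
      ring
    · rintro k ⟨hki, hki'⟩
      simp only [lowerBidiag, Matrix.of_apply, if_neg (Ne.symm hki)]
      rw [if_neg, zero_mul]
      rintro ⟨hk, -⟩
      exact hki' (Fin.ext (by omega))
  · rw [Fintype.sum_eq_single i]
    · simp [lowerBidiag]
    · intro k hk
      simp only [lowerBidiag, Matrix.of_apply, if_neg (Ne.symm hk)]
      rw [if_neg (fun h => hi h.2), zero_mul]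

theorem of_mul_lowerBidiag_transpose_apply {s : ℕ} (hs : 0 < s) (m : ℕ → R)
    (f : ℕ → ℕ → R) (i j : Fin N) :
    (Matrix.of (fun k l : Fin N => f k l) * (lowerBidiag s m)ᵀ : Matrix (Fin N) (Fin N) R) i j =
      f i j - if s ≤ j then m j * f i (j - 1) else 0 := by
  rw [← Matrix.transpose_transpose (Matrix.of _), ← Matrix.transpose_mul,
    Matrix.transpose_apply]
  exact lowerBidiag_mul_of_apply hs m (fun k l => f l k) j i

theorem det_lowerBidiag (s : ℕ) (m : ℕ → R) :
    (lowerBidiag s m : Matrix (Fin N) (Fin N) R).det = 1 := by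
  rw [Matrix.det_of_isLowerTriangular]
  · simp [lowerBidiag]
  · intro i j hij
    have hij : (i : ℕ) < j := hij
    simp only [lowerBidiag, Matrix.of_apply]
    rw [if_neg (Fin.ne_of_val_ne hij.ne), if_neg (by omega)]

theorem isUnit_lowerBidiag (s : ℕ) (m : ℕ → R) :
    IsUnit (lowerBidiag s m : Matrix (Fin N) (Fin N) R) := by
  rw [Matrix.isUnit_iff_isUnit_det, det_lowerBidiag]
  exact isUnit_one

end Bidiagonal

def diffProd (u : ℕ → R) (s i : ℕ) : R := ∏ k ∈ Finset.range s, (u i - u (i - 1 - k))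

section Elimination

variable (u w c : ℕ → R)

/-- Row `i` of `F_s ⋯ F_1 (c_j w_i u_i^j)`, which has been eliminated `min i s` times. -/
def rowElim (s i j : ℕ) : R :=
  if j < min i s then 0
  else c j * w i * diffProd u (min i s) i * completeHom u (j - min i s) (i - min i s) i

/-- Row `i` of `U G_1 ⋯ G_t`, `U` the upper triangular result of the row elimination. For
`i < t` the variables `u_t, …, u_i` are empty, which clears the row off the diagonal. -/
def colElim (t i j : ℕ) : R :=
  if j < i then 0 else c j * w i * diffProd u i i * completeHom u (j - i) t i

theorem rowElim_zero (i j : ℕ) : rowElim u w c 0 i j = c j * w i * u i ^ j := by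
  simp [rowElim, diffProd, completeHom_self]

theorem rowElim_succ_of_le {s i : ℕ} (j : ℕ) (h : i ≤ s) :
    rowElim u w c (s + 1) i j = rowElim u w c s i j := by
  rw [rowElim, rowElim, min_eq_left h, min_eq_left (h.trans s.le_succ)]

theorem rowElim_succ_succ {s i : ℕ} (j : ℕ) (h : s ≤ i) {m : R}
    (hm : m * (w i * diffProd u s i) = w (i + 1) * diffProd u s (i + 1)) :
    rowElim u w c (s + 1) (i + 1) j = rowElim u w c s (i + 1) j - m * rowElim u w c s i j := by
  simp only [rowElim, min_eq_right h, min_eq_right (Nat.succ_le_succ h),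
    min_eq_right (h.trans i.le_succ)]
  rcases lt_trichotomy j s with hj | rfl | hj
  · simp [hj, hj.trans s.lt_succ_self]
  · simp only [lt_irrefl, if_false, Nat.lt_succ_self, if_true, Nat.sub_self, completeHom_zero]
    linear_combination c j * hm
  · obtain ⟨d, rfl⟩ := Nat.exists_eq_add_of_lt hj
    have hdiv := completeHom_succ_sub u d (a := i - s) (b := i) (by omega)
    have hprod : diffProd u (s + 1) (i + 1) = diffProd u s (i + 1) * (u (i + 1) - u (i - s)) := by
      simp [diffProd, Finset.prod_range_succ]
    rw [if_neg (by omega), if_neg (by omega), if_neg (by omega), hprod,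
      show s + d + 1 - (s + 1) = d by omega, show s + d + 1 - s = d + 1 by omega,
      show i + 1 - (s + 1) = i - s by omega, show i + 1 - s = i - s + 1 by omega]
    linear_combination (c (s + d + 1) * completeHom u (d + 1) (i - s) i) * hm
      - c (s + d + 1) * w (i + 1) * diffProd u s (i + 1) * hdiv

theorem rowElim_eq_colElim_zero {s i : ℕ} (j : ℕ) (h : i ≤ s) :
    rowElim u w c s i j = colElim u w c 0 i j := by
  rw [rowElim, colElim, min_eq_left h, Nat.sub_self]

theorem colElim_succ_of_le {t j : ℕ} (i : ℕ) (h : j ≤ t) :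
    colElim u w c (t + 1) i j = colElim u w c t i j := by
  unfold colElim
  split_ifs with hji
  · rfl
  obtain rfl | hij := (not_lt.1 hji).eq_or_lt
  · simp
  obtain ⟨d, rfl⟩ := Nat.exists_eq_add_of_lt hij
  rw [show i + d + 1 - i = d + 1 by omega, completeHom_succ_of_lt u d (by omega),
    completeHom_succ_of_lt u d (by omega)]

theorem colElim_succ_succ {t j : ℕ} (i : ℕ) (h : t ≤ j) {m : R}
    (hm : m * c j = c (j + 1) * u t) :
    colElim u w c (t + 1) i (j + 1) = colElim u w c t i (j + 1) - m * colElim u w c t i j := by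
  unfold colElim
  rcases lt_or_ge j i with hji | hij
  · rw [if_pos hji, mul_zero, sub_zero]
    obtain rfl | hlt := (Nat.succ_le_of_lt hji).eq_or_lt
    · simp
    · simp [hlt]
  rw [if_neg (by omega), if_neg (by omega), if_neg (by omega), show j + 1 - i = j - i + 1 by omega]
  rcases le_or_gt t i with hti | hit
  · linear_combination (-(c (j + 1)) * w i * diffProd u i i) *
      completeHom_succ_of_le u (j - i) hti + w i * diffProd u i i * completeHom u (j - i) t i * hm
  · rw [completeHom_succ_of_lt u _ hit, completeHom_succ_of_lt u _ (hit.trans t.lt_succ_self),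
      show j - i = j - i - 1 + 1 by omega, completeHom_succ_of_lt u _ hit]
    ring

theorem colElim_of_le {t i j : ℕ} (hi : i ≤ t) (hj : j ≤ t) :
    colElim u w c t i j = if i = j then c i * w i * diffProd u i i else 0 := by
  unfold colElim
  rcases lt_trichotomy j i with hji | rfl | hij
  · simp [hji, hji.ne']
  · simp
  · obtain ⟨d, rfl⟩ := Nat.exists_eq_add_of_lt hij
    rw [if_neg (by omega), if_neg (by omega), show i + d + 1 - i = d + 1 by omega,
      completeHom_succ_of_lt u d (by omega), mul_zero]

variable {N : ℕ}

theorem lowerBidiag_prod_mul_weightedVandermonde (M : ℕ → ℕ → R)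
    (hM : ∀ s i, s ≤ i → i + 1 < N →
      M (s + 1) (i + 1) * (w i * diffProd u s i) = w (i + 1) * diffProd u s (i + 1)) (s : ℕ) :
    ((List.range s).reverse.map fun t => lowerBidiag (t + 1) (M (t + 1))).prod *
        Matrix.of (fun i j : Fin N => c j * w i * u i ^ (j : ℕ)) =
      Matrix.of fun i j : Fin N => rowElim u w c s i j := by
  induction s with
  | zero => ext i j; simp [rowElim_zero]
  | succ s ih =>
    rw [List.range_succ, List.reverse_append, List.reverse_singleton, List.singleton_append,
      List.map_cons, List.prod_cons, Matrix.mul_assoc, ih]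
    ext i j
    rw [lowerBidiag_mul_of_apply s.succ_pos, Matrix.of_apply]
    split_ifs with hi
    · obtain ⟨i', hi'⟩ : ∃ i', (i : ℕ) = i' + 1 := ⟨i - 1, by omega⟩
      rw [hi', Nat.add_sub_cancel,
        rowElim_succ_succ u w c j (by omega) (hM s i' (by omega) (by omega))]
    · rw [sub_zero, rowElim_succ_of_le u w c j (by omega)]

theorem colElim_mul_prod_lowerBidiag_transpose (M : ℕ → ℕ → R)
    (hM : ∀ t j, t ≤ j → j + 1 < N → M (t + 1) (j + 1) * c j = c (j + 1) * u t) (t : ℕ) :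
    Matrix.of (fun i j : Fin N => colElim u w c 0 i j) *
        ((List.range t).map fun r => (lowerBidiag (r + 1) (M (r + 1)))ᵀ).prod =
      Matrix.of fun i j : Fin N => colElim u w c t i j := by
  induction t with
  | zero => simp
  | succ t ih =>
    rw [List.range_succ, List.map_append, List.prod_append, List.map_singleton,
      List.prod_singleton, ← Matrix.mul_assoc, ih]
    ext i j
    rw [of_mul_lowerBidiag_transpose_apply t.succ_pos, Matrix.of_apply]
    split_ifs with hj
    · obtain ⟨j', hj'⟩ : ∃ j', (j : ℕ) = j' + 1 := ⟨j - 1, by omega⟩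
      rw [hj', Nat.add_sub_cancel,
        colElim_succ_succ u w c i (by omega) (hM t j' (by omega) (by omega))]
    · rw [sub_zero, colElim_succ_of_le u w c i (by omega)]

end Elimination

noncomputable def bvOdds (x : ℕ → ℝ) (k : ℕ) : ℝ := x (k + 1) / (1 - x (k + 1))

noncomputable def bvWeight (n : ℕ) (x : ℕ → ℝ) (k : ℕ) : ℝ := (1 - x (k + 1)) ^ n

theorem FBV_eq_lowerBidiag (n : ℕ) (x : ℕ → ℝ) (p : ℕ) :
    FBV n x p = lowerBidiag p fun k => mBV n x (k + 1) p := rfl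

theorem GBV_eq_lowerBidiag_transpose (n : ℕ) (x : ℕ → ℝ) (p : ℕ) :
    GBV n x p = (lowerBidiag p fun k => mtBV n x (k + 1) p)ᵀ := by
  ext k l
  simp only [GBV, lowerBidiag, Matrix.transpose_apply, Matrix.of_apply, eq_comm (a := k)]

theorem mBV_eq_prod_range (n : ℕ) (x : ℕ → ℝ) {s : ℕ} (hs : s ≤ n) (i : ℕ) :
    mBV n x (i + 2) (s + 1) =
      (1 - x (i + 2)) ^ (n - s) * (1 - x (i + 1 - s)) *
          (∏ k ∈ Finset.range s, (x (i + 2) - x (i + 1 - k))) /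
        ((1 - x (i + 1)) ^ (n - s + 1) * ∏ k ∈ Finset.range s, (x (i + 1) - x (i - k))) := by
  rw [mBV, ← Finset.Ico_add_one_right_eq_Icc, ← Finset.Ico_add_one_right_eq_Icc,
    Finset.prod_Ico_eq_prod_range, Finset.prod_Ico_eq_prod_range]
  simp only [show n + 1 - (s + 1) = n - s by omega, show i + 2 - (s + 1) = i + 1 - s by omega,
    show s + 1 - 1 + 1 - 1 = s by omega, show s + 1 + 1 - 2 = s by omega,
    show i + 2 - 1 = i + 1 by omega, show n + 2 - (s + 1) = n - s + 1 by omega,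
    show ∀ k, i + 2 - (1 + k) = i + 1 - k by omega, show ∀ k, i + 2 - (2 + k) = i - k by omega]

theorem mtBV_mul_choose (n : ℕ) (x : ℕ → ℝ) {j : ℕ} (hj : j < n) (t : ℕ) :
    mtBV n x (j + 2) (t + 1) * n.choose j = n.choose (j + 1) * bvOdds x t := by
  have hchoose : (n.choose (j + 1) : ℝ) * (j + 1) = n.choose j * (n - j) := by
    have h := congrArg (Nat.cast (R := ℝ)) (Nat.choose_succ_right_eq n j)
    push_cast [Nat.cast_sub hj.le] at h
    exact h
  rw [mtBV, bvOdds, mul_div_mul_comm, mul_right_comm]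
  congr 1
  push_cast
  rw [show ((n : ℝ) - (j + 2) + 2) / (j + 2 - 1) = (n - j) / (j + 1) by ring,
    div_mul_eq_mul_div, div_eq_iff (by positivity)]
  linear_combination -hchoose

section BernsteinVandermonde

variable {n : ℕ} {x : ℕ → ℝ} (hx1 : ∀ k, 1 ≤ k → k ≤ n + 1 → x k ≠ 1)
  (hinj : ∀ k l, 1 ≤ k → k < l → l ≤ n + 1 → x k ≠ x l)
include hx1

theorem bvWeight_mul_diffProd {s i : ℕ} (hs : s ≤ i) (hi : i ≤ n) :
    bvWeight n x i * diffProd (bvOdds x) s i =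
      (1 - x (i + 1)) ^ (n - s) * (∏ k ∈ Finset.range s, (x (i + 1) - x (i - k))) /
        ∏ k ∈ Finset.range s, (1 - x (i - k)) := by
  have hfac : ∀ k ∈ Finset.range s, bvOdds x i - bvOdds x (i - 1 - k) =
      (x (i + 1) - x (i - k)) / ((1 - x (i + 1)) * (1 - x (i - k))) := by
    intro k hk
    rw [Finset.mem_range] at hk
    rw [bvOdds, bvOdds, show i - 1 - k + 1 = i - k by omega]
    exact odds_sub_odds (hx1 _ (by omega) (by omega)) (hx1 _ (by omega) (by omega))
  have hxi : 1 - x (i + 1) ≠ 0 := sub_ne_zero.2 (hx1 _ (by omega) (by omega)).symm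
  have hQ : ∏ k ∈ Finset.range s, (1 - x (i - k)) ≠ 0 := Finset.prod_ne_zero_iff.2 fun k hk =>
    sub_ne_zero.2 (hx1 _ (by rw [Finset.mem_range] at hk; omega) (by omega)).symm
  rw [bvWeight, diffProd, Finset.prod_congr rfl hfac, Finset.prod_div_distrib,
    Finset.prod_mul_distrib, Finset.prod_const, Finset.card_range,
    ← pow_sub_mul_pow (1 - x (i + 1)) (hs.trans hi)]
  field_simp

theorem eq_weightedVandermonde_of_apply {A : Matrix (Fin (n + 1)) (Fin (n + 1)) ℝ}
    (hA : ∀ i j, A i j = (n.choose j : ℝ) * (1 - x ((i : ℕ) + 1)) ^ (n - (j : ℕ)) *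
      x ((i : ℕ) + 1) ^ (j : ℕ)) :
    A = Matrix.of fun i j : Fin (n + 1) =>
      (n.choose j : ℝ) * bvWeight n x i * bvOdds x i ^ (j : ℕ) := by
  ext i j
  rw [hA, mul_assoc, one_sub_pow_sub_mul_pow (hx1 _ (by omega) (by omega)) (by omega),
    ← mul_assoc]
  rfl

theorem choose_mul_bvWeight_mul_diffProd_self {i : ℕ} (hi : i ≤ n) :
    n.choose i * bvWeight n x i * diffProd (bvOdds x) i i = pBV n x (i + 1) := by
  rw [mul_assoc, bvWeight_mul_diffProd hx1 le_rfl hi, pBV, Nat.add_sub_cancel,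
    show n + 1 - (i + 1) = n - i by omega, Finset.Ico_add_one_right_eq_Icc,
    prod_range_sub_eq_prod_Icc (fun k => x (i + 1) - x k),
    prod_range_sub_eq_prod_Icc (fun k => 1 - x k)]
  ring

theorem rowElim_mul_prod_GBV :
    (Matrix.of fun i j : Fin (n + 1) =>
        rowElim (bvOdds x) (bvWeight n x) (fun j => (n.choose j : ℝ)) n i j) *
      ((List.range n).map fun t => GBV n x (t + 1)).prod = DBV n x := by
  have hUV : (Matrix.of fun i j : Fin (n + 1) =>
        rowElim (bvOdds x) (bvWeight n x) (fun j => (n.choose j : ℝ)) n i j) =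
      Matrix.of fun i j : Fin (n + 1) =>
        colElim (bvOdds x) (bvWeight n x) (fun j => (n.choose j : ℝ)) 0 i j := by
    ext i j
    rw [Matrix.of_apply, Matrix.of_apply]
    exact rowElim_eq_colElim_zero _ _ _ _ (Nat.lt_succ_iff.1 i.2)
  simp only [hUV, GBV_eq_lowerBidiag_transpose]
  refine (colElim_mul_prod_lowerBidiag_transpose _ _ _ (fun p k => mtBV n x (k + 1) p)
    (fun t j _ hj => mtBV_mul_choose n x (by omega) t) n).trans ?_
  ext i j
  rw [Matrix.of_apply, colElim_of_le _ _ _ (by omega) (by omega), DBV, Matrix.diagonal_apply]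
  simp only [Fin.val_inj]
  split_ifs with hij
  · subst hij
    exact choose_mul_bvWeight_mul_diffProd_self hx1 (by omega)
  · rfl

include hinj

theorem pBV_ne_zero {i : ℕ} (hi : i ≤ n) : pBV n x (i + 1) ≠ 0 := by
  rw [pBV]
  refine div_ne_zero (mul_ne_zero (mul_ne_zero ?_ ?_) ?_) ?_
  · exact_mod_cast (Nat.choose_pos (by omega)).ne'
  · exact pow_ne_zero _ (sub_ne_zero.2 (hx1 _ (by omega) (by omega)).symm)
  · refine Finset.prod_ne_zero_iff.2 fun k hk => sub_ne_zero.2 ?_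
    rw [Finset.mem_Ico] at hk
    exact (hinj k (i + 1) hk.1 hk.2 (by omega)).symm
  · refine Finset.prod_ne_zero_iff.2 fun k hk => sub_ne_zero.2 ?_
    rw [Finset.mem_Icc] at hk
    exact (hx1 k hk.1 (by omega)).symm

theorem isUnit_det_DBV : IsUnit (DBV n x).det := by
  rw [DBV, Matrix.det_diagonal]
  exact (Finset.prod_ne_zero_iff.2 fun k _ => pBV_ne_zero hx1 hinj (by omega)).isUnit

theorem mBV_mul_bvWeight_mul_diffProd {s i : ℕ} (hs : s ≤ i) (hi : i + 1 ≤ n) :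
    mBV n x (i + 2) (s + 1) * (bvWeight n x i * diffProd (bvOdds x) s i) =
      bvWeight n x (i + 1) * diffProd (bvOdds x) s (i + 1) := by
  have htel := mul_prod_range_sub (fun k => 1 - x k) (i + 1) s
  simp only [Nat.add_sub_cancel] at htel
  rw [mBV_eq_prod_range n x (by omega), bvWeight_mul_diffProd hx1 hs (by omega),
    bvWeight_mul_diffProd hx1 (by omega) hi]
  have hxi : 1 - x (i + 1) ≠ 0 := sub_ne_zero.2 (hx1 _ (by omega) (by omega)).symm
  have hP : ∏ k ∈ Finset.range s, (x (i + 1) - x (i - k)) ≠ 0 :=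
    Finset.prod_ne_zero_iff.2 fun k hk => sub_ne_zero.2 <| by
      rw [Finset.mem_range] at hk; exact (hinj _ _ (by omega) (by omega) (by omega)).symm
  have hQ : ∀ a ≤ n, s ≤ a → ∏ k ∈ Finset.range s, (1 - x (a - k)) ≠ 0 := fun a _ _ =>
    Finset.prod_ne_zero_iff.2 fun k hk => sub_ne_zero.2 <| by
      rw [Finset.mem_range] at hk; exact (hx1 _ (by omega) (by omega)).symm
  have hQ0 := hQ i (by omega) hs
  have hQ1 := hQ (i + 1) hi (by omega)
  field_simp
  linear_combination (1 - x (i + 2)) ^ (n - s) *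
    (∏ k ∈ Finset.range s, (x (i + 2) - x (i + 1 - k))) * (1 - x (i + 1)) ^ (n - s) * htel

theorem prod_FBV_mul_weightedVandermonde :
    ((List.range n).reverse.map fun t => FBV n x (t + 1)).prod *
        Matrix.of (fun i j : Fin (n + 1) =>
          (n.choose j : ℝ) * bvWeight n x i * bvOdds x i ^ (j : ℕ)) =
      Matrix.of fun i j : Fin (n + 1) =>
        rowElim (bvOdds x) (bvWeight n x) (fun j => (n.choose j : ℝ)) n i j := by
  exact lowerBidiag_prod_mul_weightedVandermonde _ _ (fun j => (n.choose j : ℝ))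
    (fun p k => mBV n x (k + 1) p)
    (fun _ _ hs hi => mBV_mul_bvWeight_mul_diffProd hx1 hinj hs (Nat.lt_succ_iff.1 hi)) n

end BernsteinVandermonde

/-- Bidiagonal factorization of the inverse of the Bernstein–Vandermonde matrix:
A⁻¹ = G₁G₂⋯Gₙ D⁻¹ Fₙ⋯F₁. -/
theorem bernstein_vandermonde_inverse_bidiagonal (n : ℕ) (x : ℕ → ℝ)
    (hx : ∀ k, 1 ≤ k → k ≤ n + 1 → 0 < x k ∧ x k < 1)
    (hmono : ∀ k l, 1 ≤ k → k < l → l ≤ n + 1 → x k < x l)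
    (A : Matrix (Fin (n + 1)) (Fin (n + 1)) ℝ)
    (hA : ∀ i j, A i j =
      (n.choose j : ℝ) * (1 - x ((i : ℕ) + 1)) ^ (n - (j : ℕ)) * x ((i : ℕ) + 1) ^ (j : ℕ)) :
    A⁻¹ = ((List.range n).map fun t => GBV n x (t + 1)).prod * (DBV n x)⁻¹ *
      (((List.range n).reverse.map fun t => FBV n x (t + 1)).prod) := by
  have hx1 k h1 h2 : x k ≠ 1 := (hx k h1 h2).2.ne
  have hinj k l h1 h2 h3 : x k ≠ x l := (hmono k l h1 h2 h3).ne
  have hFAG : ((List.range n).reverse.map fun t => FBV n x (t + 1)).prod * A *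
      ((List.range n).map fun t => GBV n x (t + 1)).prod = DBV n x := by
    rw [eq_weightedVandermonde_of_apply hx1 hA, prod_FBV_mul_weightedVandermonde hx1 hinj,
      rowElim_mul_prod_GBV hx1]
  refine Matrix.inv_eq_of_mul_mul_eq (List.prod_isUnit fun F hF => ?_) (isUnit_det_DBV hx1 hinj)
    hFAG
  obtain ⟨t, -, rfl⟩ := List.mem_map.1 hF
  rw [FBV_eq_lowerBidiag]
  exact isUnit_lowerBidiag _ _
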